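/- arXiv:1405.3018 — 2 statements merged into one kernel-verified Lean document; each statement's English description precedes it below -/
import Mathlib

section
/- Assume t_0 ≠ 1 and for t ∈ (0,1) set τ_j = t^{n−j} t_0 and τ̂_j = t^{n−j} t̂_0 (j = 1,…,n), and define V_j^+(λ;t) = τ̂_1^{−1} ∏_{r=0}^{3}(1 − t_r τ_j q^{λ_j}) / [(1 − τ_j² q^{2λ_j})(1 − τ_j² q^{2λ_j+1})] · ∏_{k≠j} [(1 − t τ_j τ_k q^{λ_j+λ_k})(1 − t τ_j τ_k^{−1} q^{λ_j−λ_k})] / [(1 − τ_j τ_k q^{λ_j+λ_k})(1 − τ_j τ_k^{−1} q^{λ_j−λ_k})] and V_j^−(λ;t) = τ̂_1 ∏_{r=0}^{3}(1 − t_r^{−1} τ_j q^{λ_j}) / [(1 − τ_j² q^{2λ_j})(1 − τ_j² q^{2λ_j−1})] · ∏_{k≠j} [(1 − t^{−1} τ_j τ_k q^{λ_j+λ_k})(1 − t^{−1} τ_j τ_k^{−1} q^{λ_j−λ_k})] / [(1 − τ_j τ_k q^{λ_j+λ_k})(1 − τ_j τ_k^{−1} q^{λ_j−λ_k})]. Then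 for every λ ∈ Λ and 1 ≤ j ≤ n: if λ + e_j ∈ Λ then lim_{t→0^+} τ̂_j V_j^+(λ;t) = v_j^+(λ), and if λ − e_j ∈ Λ then lim_{t→0^+} τ̂_j^{−1} V_j^−(λ;t) = v_j^−(λ), where v_j^+(λ) = (1 − q^{λ_{j−1}−λ_j}) for 2 ≤ j < n, v_1^+(λ) = 1, v_n^+(λ) = (1 − q^{λ_{n−1}−λ_n}) ∏_{r=0}^{3}(1 − t_r t_0 q^{λ_n}) / [(1 − t_0² q^{2λ_n})(1 − t_0² q^{2λ_n+1})], v_j^−(λ) = (1 − q^{λ_j−λ_{j+1}}) for 1 ≤ j < n−1, v_{n−1}^−(λ) = (1 − q^{λ_{n−1}−λ_n})(1 − t_0² q^{λ_{n−1}+λ_n}), and v_n^−(λ) = (1 − t_0² q^{λ_{n−1}+λ_n}) ∏_{r=0}^{3}(1 − t_r^{−1} t_0 q^{λ_n}) / [(1 − t_0² q^{2λ_n})(1 − t_0² q^{2λ_n−1})]. (t → 0 limits of the Macdonald–Koornwinder Pieri coefficients.) -/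
open scoped BigOperators
open MeasureTheory Filter

noncomputable section

attribute [local instance] Classical.propDecidable

/-- `lam` is a partition: weakly decreasing with nonnegative entries. -/
def IsPart {n : ℕ} (lam : Fin n → ℤ) : Prop :=
  (∀ j k : Fin n, j ≤ k → lam k ≤ lam j) ∧ ∀ j, 0 ≤ lam j

/-- hyperoctahedral dominance order (non-strict). -/
def domLE {n : ℕ} (mu lam : Fin n → ℤ) : Prop :=
  ∀ k : Fin n, ∑ j ∈ Finset.univ.filter (fun j : Fin n => j ≤ k), mu j
             ≤ ∑ j ∈ Finset.univ.filter (fun j : Fin n => j ≤ k), lam j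

/-- strict dominance order. -/
def domLT {n : ℕ} (mu lam : Fin n → ℤ) : Prop := domLE mu lam ∧ mu ≠ lam

/-- action of a signed permutation on an integer vector. -/
def signAct {n : ℕ} (σ : Equiv.Perm (Fin n)) (ε : Fin n → Bool) (v : Fin n → ℤ) :
    Fin n → ℤ := fun j => (if ε j then 1 else -1) * v (σ j)

/-- the orbit of `lam` under the hyperoctahedral group `W`, as a finite set. -/
def Worbit {n : ℕ} (lam : Fin n → ℤ) : Finset (Fin n → ℤ) :=
  Finset.image (fun w : Equiv.Perm (Fin n) × (Fin n → Bool) => signAct w.1 w.2 lam)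
    Finset.univ

/-- hyperoctahedral monomial symmetric function `m_λ`. -/
def mSym {n : ℕ} (lam : Fin n → ℤ) (ξ : Fin n → ℝ) : ℂ :=
  ∑ mu ∈ Worbit lam, Complex.exp (Complex.I * ∑ j, (mu j : ℂ) * (ξ j : ℂ))

/-- finite q-Pochhammer symbol (real). -/
def qPochR (q x : ℝ) (m : ℕ) : ℝ := ∏ l ∈ Finset.range m, (1 - x * q ^ l)

/-- infinite q-Pochhammer symbol (complex). -/
def qPochInf (q x : ℂ) : ℂ := ∏' l : ℕ, (1 - x * q ^ l)

/-- infinite q-Pochhammer symbol (real). -/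
def qPochInfR (q x : ℝ) : ℝ := ∏' l : ℕ, (1 - x * q ^ l)

/-- the weight function Δ̂. -/
def qwWeight {n : ℕ} (q : ℝ) (th : Fin 4 → ℝ) (ξ : Fin n → ℝ) : ℝ :=
  (2 * Real.pi)⁻¹ ^ n *
  (∏ p ∈ Finset.univ.filter (fun p : Fin n × Fin n => p.1 < p.2),
      ‖(qPochInf (q : ℂ) (Complex.exp (Complex.I * ((ξ p.1 : ℂ) + (ξ p.2 : ℂ)))) *
        qPochInf (q : ℂ) (Complex.exp (Complex.I * ((ξ p.1 : ℂ) - (ξ p.2 : ℂ)))))‖ ^ 2) *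
  ∏ j, ‖(qPochInf (q : ℂ) (Complex.exp (2 * Complex.I * (ξ j : ℂ))) /
        ∏ r, qPochInf (q : ℂ) ((th r : ℂ) * Complex.exp (Complex.I * (ξ j : ℂ))))‖ ^ 2

/-- the hyperoctahedral Weyl alcove 𝔸. -/
def alcove (n : ℕ) : Set (Fin n → ℝ) :=
  {ξ | StrictAnti ξ ∧ ∀ j, 0 < ξ j ∧ ξ j < Real.pi}

/-- deformed hyperoctahedral q-Whittaker family. -/
def IsQWhitFam {n : ℕ} (q : ℝ) (th : Fin 4 → ℝ)
    (p : (Fin n → ℤ) → (Fin n → ℝ) → ℂ) : Prop :=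
  ∀ lam : Fin n → ℤ, IsPart lam →
    (∃ c : (Fin n → ℤ) → ℂ, (Function.support c).Finite ∧
        (∀ mu, c mu ≠ 0 → IsPart mu ∧ domLT mu lam) ∧
        ∀ ξ : Fin n → ℝ, p lam ξ = mSym lam ξ + ∑ᶠ mu, c mu * mSym mu ξ) ∧
    (∀ mu : Fin n → ℤ, IsPart mu → domLT mu lam →
      (∫ ξ in alcove n, p lam ξ * (starRingEnd ℂ) (mSym mu ξ) * (qwWeight q th ξ : ℂ)) = 0)

/-- padded access to the parts of `lam` (0-indexed); out-of-range values are never used. -/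
def getp {n : ℕ} (lam : Fin n → ℤ) (k : ℕ) : ℤ := if h : k < n then lam ⟨k, h⟩ else 0

/-- standard unit vector `e_j` in ℤⁿ. -/
def eVec {n : ℕ} (j : Fin n) : Fin n → ℤ := fun k => if k = j then 1 else 0

/-- coefficient `v_j^+(λ)` of the difference Toda Hamiltonian (0-indexed `j`). -/
def vplus {n : ℕ} (q t0 : ℝ) (t : Fin 4 → ℝ) (lam : Fin n → ℤ) (j : Fin n) : ℝ :=
  if (j : ℕ) = 0 then 1
  else if (j : ℕ) = n - 1 then
    (1 - q ^ (getp lam ((j : ℕ) - 1) - getp lam (j : ℕ))) *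
      (∏ r, (1 - t r * t0 * q ^ getp lam (j : ℕ))) /
      ((1 - t0 ^ 2 * q ^ (2 * getp lam (j : ℕ))) *
       (1 - t0 ^ 2 * q ^ (2 * getp lam (j : ℕ) + 1)))
  else 1 - q ^ (getp lam ((j : ℕ) - 1) - getp lam (j : ℕ))

/-- coefficient `v_j^-(λ)` of the difference Toda Hamiltonian (0-indexed `j`). -/
def vminus {n : ℕ} (q t0 : ℝ) (t : Fin 4 → ℝ) (lam : Fin n → ℤ) (j : Fin n) : ℝ :=
  if (j : ℕ) = n - 1 then
    (1 - t0 ^ 2 * q ^ (getp lam (n - 2) + getp lam (n - 1))) *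
      (∏ r, (1 - (t r)⁻¹ * t0 * q ^ getp lam (n - 1))) /
      ((1 - t0 ^ 2 * q ^ (2 * getp lam (n - 1))) *
       (1 - t0 ^ 2 * q ^ (2 * getp lam (n - 1) - 1)))
  else if (j : ℕ) = n - 2 then
    (1 - q ^ (getp lam (j : ℕ) - getp lam ((j : ℕ) + 1))) *
      (1 - t0 ^ 2 * q ^ (getp lam (n - 2) + getp lam (n - 1)))
  else 1 - q ^ (getp lam (j : ℕ) - getp lam ((j : ℕ) + 1))

/-- additive boundary potential `u(λ)` of Askey-Wilson type. -/
def upot {n : ℕ} (q t0 th0 : ℝ) (t : Fin 4 → ℝ) (lam : Fin n → ℤ) : ℝ :=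
  ∑ ε ∈ ({1, -1} : Finset ℝ),
    ((2 * th0)⁻¹ * ∏ r, (1 - ε * (Real.sqrt q)⁻¹ * t r)) *
      (1 - ε * t0 * q ^ getp lam (n - 2) * Real.sqrt q) /
      ((1 - ε * t0 * q ^ getp lam (n - 1) * (Real.sqrt q)⁻¹) *
       (1 - ε * t0⁻¹ * q ^ (-getp lam (n - 1)) * (Real.sqrt q)⁻¹))
/-- `τ_j = t^{n-j} t_0` (0-indexed `j`). -/
def tauMK {n : ℕ} (tt t0 : ℝ) (j : Fin n) : ℝ := tt ^ (n - 1 - (j : ℕ)) * t0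

/-- Macdonald-Koornwinder Pieri coefficient `V_j^+(λ;t)`. -/
def VP {n : ℕ} (q t0 th0 : ℝ) (t : Fin 4 → ℝ) (tt : ℝ) (lam : Fin n → ℤ) (j : Fin n) : ℝ :=
  (tt ^ (n - 1) * th0)⁻¹ *
    ((∏ r, (1 - t r * tauMK tt t0 j * q ^ getp lam (j : ℕ))) /
      ((1 - (tauMK tt t0 j) ^ 2 * q ^ (2 * getp lam (j : ℕ))) *
       (1 - (tauMK tt t0 j) ^ 2 * q ^ (2 * getp lam (j : ℕ) + 1)))) *
    ∏ k ∈ Finset.univ.erase j,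
      ((1 - tt * tauMK tt t0 j * tauMK tt t0 k * q ^ (getp lam (j : ℕ) + getp lam (k : ℕ))) *
       (1 - tt * tauMK tt t0 j * (tauMK tt t0 k)⁻¹ * q ^ (getp lam (j : ℕ) - getp lam (k : ℕ)))) /
      ((1 - tauMK tt t0 j * tauMK tt t0 k * q ^ (getp lam (j : ℕ) + getp lam (k : ℕ))) *
       (1 - tauMK tt t0 j * (tauMK tt t0 k)⁻¹ * q ^ (getp lam (j : ℕ) - getp lam (k : ℕ))))

/-- Macdonald-Koornwinder Pieri coefficient `V_j^-(λ;t)`. -/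
def VM {n : ℕ} (q t0 th0 : ℝ) (t : Fin 4 → ℝ) (tt : ℝ) (lam : Fin n → ℤ) (j : Fin n) : ℝ :=
  (tt ^ (n - 1) * th0) *
    ((∏ r, (1 - (t r)⁻¹ * tauMK tt t0 j * q ^ getp lam (j : ℕ))) /
      ((1 - (tauMK tt t0 j) ^ 2 * q ^ (2 * getp lam (j : ℕ))) *
       (1 - (tauMK tt t0 j) ^ 2 * q ^ (2 * getp lam (j : ℕ) - 1)))) *
    ∏ k ∈ Finset.univ.erase j,
      ((1 - tt⁻¹ * tauMK tt t0 j * tauMK tt t0 k * q ^ (getp lam (j : ℕ) + getp lam (k : ℕ))) *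
       (1 - tt⁻¹ * tauMK tt t0 j * (tauMK tt t0 k)⁻¹ * q ^ (getp lam (j : ℕ) - getp lam (k : ℕ)))) /
      ((1 - tauMK tt t0 j * tauMK tt t0 k * q ^ (getp lam (j : ℕ) + getp lam (k : ℕ))) *
       (1 - tauMK tt t0 j * (tauMK tt t0 k)⁻¹ * q ^ (getp lam (j : ℕ) - getp lam (k : ℕ))))

/-!
With `τ_j = t^(n-1-j) t₀`, every cross factor of `V_j^±` depends on `t` only through
`t^(±1) τ_j τ_k` and `t^(±1) τ_j / τ_k`, i.e. through powers of `t`. Pulling one factor `t^(±1)`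
out of each cross factor with `k < j` absorbs the normalisation `t^(n-1)` against `τ̂_j^(±1)`;
what remains is a product of ratios `(1 - t^e y) / (1 - t^f y)` with `f ≥ 1`, continuous at
`t = 0` with value `1 - 0^e y`. Only the exponents `e = 0` survive: the neighbour `k = j - 1`
(resp. `k = j + 1`) and, for `V⁻`, the pair `{n-2, n-1}` through `τ_j τ_k / t`. The boundary
factor tends to `1` unless `j = n - 1`, where its denominators stay nonzero because
`t₀² q = t̂₀t̂₁t̂₂t̂₃ < 1` and `t₀ ≠ 1`.
-/

open Finset Topology

def powRatio (e f : ℕ) (y x : ℝ) : ℝ := (1 - x ^ e * y) / (1 - x ^ f * y)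

lemma tendsto_powRatio (e : ℕ) {f : ℕ} (hf : f ≠ 0) (y : ℝ) :
    Tendsto (powRatio e f y) (𝓝 0) (𝓝 (1 - 0 ^ e * y)) := by
  have hden : (1 : ℝ) - 0 ^ f * y ≠ 0 := by simp [zero_pow hf]
  have h := ((by fun_prop : Continuous fun x : ℝ => 1 - x ^ e * y).tendsto 0).div
    ((by fun_prop : Continuous fun x : ℝ => 1 - x ^ f * y).tendsto 0) hden
  rwa [zero_pow hf, zero_mul, sub_zero, div_one] at h

lemma one_sub_inv_pow_div {x D : ℝ} (hx : x ≠ 0) (hD : D ≠ 0) (e f : ℕ) :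
    (1 - (x ^ e)⁻¹ * D) / (1 - (x ^ f)⁻¹ * D) = x ^ f / x ^ e * powRatio e f D⁻¹ x := by
  have factor (p : ℕ) : 1 - (x ^ p)⁻¹ * D = -((x ^ p)⁻¹ * D) * (1 - x ^ p * D⁻¹) := by
    field_simp
    ring
  rw [factor e, factor f, powRatio, mul_div_mul_comm, neg_div_neg_eq]
  congr 1
  field_simp

/-- The factor of `V_j^±` indexed by `k ≠ j`, with `u = τ_j`, `v = τ_k`, `s = t^(±1)`. -/
def crossFactor (s u v S D : ℝ) : ℝ :=
  (1 - s * u * v * S) * (1 - s * u * v⁻¹ * D) / ((1 - u * v * S) * (1 - u * v⁻¹ * D))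

section crossFactor

variable {x c D : ℝ} (S : ℝ)

lemma crossFactor_pow_lt (hx : x ≠ 0) (hc : c ≠ 0) (hD : D ≠ 0) (a m : ℕ) :
    crossFactor x (x ^ a * c) (x ^ (a + m + 1) * c) S D
      = x * (powRatio (2 * a + m + 2) (2 * a + m + 1) (c ^ 2 * S) x *
          powRatio m (m + 1) D⁻¹ x) := by
  have hSnum : 1 - x * (x ^ a * c) * (x ^ (a + m + 1) * c) * S
      = 1 - x ^ (2 * a + m + 2) * (c ^ 2 * S) := by ring
  have hSden : 1 - x ^ a * c * (x ^ (a + m + 1) * c) * S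
      = 1 - x ^ (2 * a + m + 1) * (c ^ 2 * S) := by ring
  have hDnum : 1 - x * (x ^ a * c) * (x ^ (a + m + 1) * c)⁻¹ * D = 1 - (x ^ m)⁻¹ * D := by
    field_simp
    ring
  have hDden : 1 - x ^ a * c * (x ^ (a + m + 1) * c)⁻¹ * D = 1 - (x ^ (m + 1))⁻¹ * D := by
    field_simp
    ring
  rw [crossFactor, mul_div_mul_comm, hSnum, hSden, hDnum, hDden, one_sub_inv_pow_div hx hD,
    pow_succ x m, mul_div_cancel_left₀ _ (pow_ne_zero _ hx)]
  simp only [powRatio]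
  ring

lemma crossFactor_pow_gt (hx : x ≠ 0) (hc : c ≠ 0) (b m : ℕ) :
    crossFactor x (x ^ (b + m + 1) * c) (x ^ b * c) S D
      = powRatio (2 * b + m + 2) (2 * b + m + 1) (c ^ 2 * S) x *
          powRatio (m + 2) (m + 1) D x := by
  have hSnum : 1 - x * (x ^ (b + m + 1) * c) * (x ^ b * c) * S
      = 1 - x ^ (2 * b + m + 2) * (c ^ 2 * S) := by ring
  have hSden : 1 - x ^ (b + m + 1) * c * (x ^ b * c) * S
      = 1 - x ^ (2 * b + m + 1) * (c ^ 2 * S) := by ring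
  have hDnum : 1 - x * (x ^ (b + m + 1) * c) * (x ^ b * c)⁻¹ * D = 1 - x ^ (m + 2) * D := by
    field_simp
    ring
  have hDden : 1 - x ^ (b + m + 1) * c * (x ^ b * c)⁻¹ * D = 1 - x ^ (m + 1) * D := by
    field_simp
    ring
  rw [crossFactor, mul_div_mul_comm, hSnum, hSden, hDnum, hDden, powRatio, powRatio]

lemma crossFactor_inv_pow_lt (hx : x ≠ 0) (hc : c ≠ 0) (hD : D ≠ 0) (a m : ℕ) :
    crossFactor x⁻¹ (x ^ a * c) (x ^ (a + m + 1) * c) S D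
      = x⁻¹ * (powRatio (2 * a + m) (2 * a + m + 1) (c ^ 2 * S) x *
          powRatio (m + 2) (m + 1) D⁻¹ x) := by
  have hSnum : 1 - x⁻¹ * (x ^ a * c) * (x ^ (a + m + 1) * c) * S
      = 1 - x ^ (2 * a + m) * (c ^ 2 * S) := by
    field_simp
    ring
  have hSden : 1 - x ^ a * c * (x ^ (a + m + 1) * c) * S
      = 1 - x ^ (2 * a + m + 1) * (c ^ 2 * S) := by ring
  have hDnum : 1 - x⁻¹ * (x ^ a * c) * (x ^ (a + m + 1) * c)⁻¹ * D
      = 1 - (x ^ (m + 2))⁻¹ * D := by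
    field_simp
    ring
  have hDden : 1 - x ^ a * c * (x ^ (a + m + 1) * c)⁻¹ * D = 1 - (x ^ (m + 1))⁻¹ * D := by
    field_simp
    ring
  rw [crossFactor, mul_div_mul_comm, hSnum, hSden, hDnum, hDden, one_sub_inv_pow_div hx hD,
    pow_succ x (m + 1), div_mul_cancel_left₀ (pow_ne_zero _ hx)]
  simp only [powRatio]
  ring

lemma crossFactor_inv_pow_gt (hx : x ≠ 0) (hc : c ≠ 0) (b m : ℕ) :
    crossFactor x⁻¹ (x ^ (b + m + 1) * c) (x ^ b * c) S D
      = powRatio (2 * b + m) (2 * b + m + 1) (c ^ 2 * S) x * powRatio m (m + 1) D x := by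
  have hSnum : 1 - x⁻¹ * (x ^ (b + m + 1) * c) * (x ^ b * c) * S
      = 1 - x ^ (2 * b + m) * (c ^ 2 * S) := by
    field_simp
    ring
  have hSden : 1 - x ^ (b + m + 1) * c * (x ^ b * c) * S
      = 1 - x ^ (2 * b + m + 1) * (c ^ 2 * S) := by ring
  have hDnum : 1 - x⁻¹ * (x ^ (b + m + 1) * c) * (x ^ b * c)⁻¹ * D = 1 - x ^ m * D := by
    field_simp
    ring
  have hDden : 1 - x ^ (b + m + 1) * c * (x ^ b * c)⁻¹ * D = 1 - x ^ (m + 1) * D := by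
    field_simp
    ring
  rw [crossFactor, mul_div_mul_comm, hSnum, hSden, hDnum, hDden, powRatio, powRatio]

end crossFactor

section PieriFactors

variable {n : ℕ} {q t0 : ℝ} (lam : Fin n → ℤ)

lemma tauMK_of_eq_add {x : ℝ} {j k : Fin n} {m : ℕ} (hjk : (j : ℕ) = k + m + 1) :
    tauMK x t0 k = x ^ (n - 1 - j + m + 1) * t0 := by
  have := j.isLt
  rw [tauMK]
  congr 2
  omega

lemma tendsto_crossFactor_plus_of_lt (hq : 0 < q) (ht0 : t0 ≠ 0) {j k : Fin n} (hkj : k < j) :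
    Tendsto (fun x : ℝ => x⁻¹ * crossFactor x (tauMK x t0 j) (tauMK x t0 k)
        (q ^ (getp lam j + getp lam k)) (q ^ (getp lam j - getp lam k)))
      (𝓝[≠] 0) (𝓝 (if (k : ℕ) = j - 1 then 1 - q ^ (getp lam (j - 1) - getp lam j) else 1)) := by
  obtain ⟨m, hm⟩ : ∃ m, (j : ℕ) = k + m + 1 := ⟨j - k - 1, by omega⟩
  have hD : q ^ (getp lam j - getp lam k) ≠ 0 := zpow_ne_zero _ hq.ne'
  have hlim := (tendsto_powRatio (2 * (n - 1 - j) + m + 2) (f := 2 * (n - 1 - j) + m + 1)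
    (Nat.succ_ne_zero _) (t0 ^ 2 * q ^ (getp lam j + getp lam k))).mul
    (tendsto_powRatio m (Nat.succ_ne_zero m) (q ^ (getp lam j - getp lam k))⁻¹)
  have hval : (1 - 0 ^ (2 * (n - 1 - j) + m + 2) * (t0 ^ 2 * q ^ (getp lam j + getp lam k))) *
      (1 - 0 ^ m * (q ^ (getp lam j - getp lam k))⁻¹)
      = if (k : ℕ) = j - 1 then 1 - q ^ (getp lam (j - 1) - getp lam j) else 1 := by
    rcases Nat.eq_zero_or_pos m with rfl | hm0
    · rw [if_pos (by omega), show (j : ℕ) - 1 = k by omega, ← zpow_neg, neg_sub]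
      simp
    · rw [if_neg (by omega)]
      simp [zero_pow hm0.ne']
  rw [← hval]
  refine (hlim.mono_left nhdsWithin_le_nhds).congr'
    (eventually_nhdsWithin_of_forall fun x hx => ?_)
  dsimp only
  rw [tauMK_of_eq_add hm, tauMK, crossFactor_pow_lt _ hx ht0 hD, inv_mul_cancel_left₀ hx]

lemma tendsto_crossFactor_plus_of_gt (ht0 : t0 ≠ 0) (S D : ℝ) {j k : Fin n} (hkj : j < k) :
    Tendsto (fun x : ℝ => crossFactor x (tauMK x t0 j) (tauMK x t0 k) S D) (𝓝[≠] 0) (𝓝 1) := by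
  obtain ⟨m, hm⟩ : ∃ m, (k : ℕ) = j + m + 1 := ⟨k - j - 1, by omega⟩
  have hlim := (tendsto_powRatio (2 * (n - 1 - k) + m + 2) (f := 2 * (n - 1 - k) + m + 1)
    (Nat.succ_ne_zero _) (t0 ^ 2 * S)).mul (tendsto_powRatio (m + 2) (f := m + 1)
      (Nat.succ_ne_zero m) D)
  simp only [zero_pow (Nat.succ_ne_zero _), zero_mul, sub_zero, mul_one] at hlim
  refine (hlim.mono_left nhdsWithin_le_nhds).congr'
    (eventually_nhdsWithin_of_forall fun x hx => ?_)
  dsimp only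
  rw [tauMK_of_eq_add hm, tauMK, crossFactor_pow_gt _ hx ht0]

lemma tendsto_crossFactor_plus (hq : 0 < q) (ht0 : t0 ≠ 0) {j k : Fin n} (hkj : k ≠ j) :
    Tendsto (fun x : ℝ => (if k < j then x else 1)⁻¹ *
        crossFactor x (tauMK x t0 j) (tauMK x t0 k)
          (q ^ (getp lam j + getp lam k)) (q ^ (getp lam j - getp lam k)))
      (𝓝[≠] 0) (𝓝 (if (k : ℕ) = j - 1 then 1 - q ^ (getp lam (j - 1) - getp lam j) else 1)) := by
  rcases lt_or_gt_of_ne hkj with hlt | hgt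
  · simpa only [if_pos hlt] using tendsto_crossFactor_plus_of_lt lam hq ht0 hlt
  · rw [if_neg (by omega)]
    simpa only [if_neg (not_lt.2 hgt.le), inv_one, one_mul] using
      tendsto_crossFactor_plus_of_gt ht0 _ _ hgt

lemma tendsto_crossFactor_minus_of_lt (hq : 0 < q) (ht0 : t0 ≠ 0) {j k : Fin n} (hkj : k < j) :
    Tendsto (fun x : ℝ => x * crossFactor x⁻¹ (tauMK x t0 j) (tauMK x t0 k)
        (q ^ (getp lam j + getp lam k)) (q ^ (getp lam j - getp lam k)))
      (𝓝[≠] 0) (𝓝 (if (k : ℕ) = 2 * n - 3 - j then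
        1 - t0 ^ 2 * q ^ (getp lam (n - 2) + getp lam (n - 1)) else 1)) := by
  obtain ⟨m, hm⟩ : ∃ m, (j : ℕ) = k + m + 1 := ⟨j - k - 1, by omega⟩
  have hD : q ^ (getp lam j - getp lam k) ≠ 0 := zpow_ne_zero _ hq.ne'
  have hlim := (tendsto_powRatio (2 * (n - 1 - j) + m) (f := 2 * (n - 1 - j) + m + 1)
    (Nat.succ_ne_zero _) (t0 ^ 2 * q ^ (getp lam j + getp lam k))).mul
    (tendsto_powRatio (m + 2) (f := m + 1) (Nat.succ_ne_zero m) (q ^ (getp lam j - getp lam k))⁻¹)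
  have hval : (1 - 0 ^ (2 * (n - 1 - j) + m) * (t0 ^ 2 * q ^ (getp lam j + getp lam k))) *
      (1 - 0 ^ (m + 2) * (q ^ (getp lam j - getp lam k))⁻¹)
      = if (k : ℕ) = 2 * n - 3 - j then
          1 - t0 ^ 2 * q ^ (getp lam (n - 2) + getp lam (n - 1)) else 1 := by
    rw [zero_pow (Nat.succ_ne_zero _), zero_mul, sub_zero, mul_one, zero_pow_eq]
    by_cases h : (k : ℕ) = 2 * n - 3 - j
    · rw [if_pos h, if_pos (by omega), one_mul, show (j : ℕ) = n - 1 by omega,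
        show (k : ℕ) = n - 2 by omega, add_comm]
    · rw [if_neg h, if_neg (by omega), zero_mul, sub_zero]
  rw [← hval]
  refine (hlim.mono_left nhdsWithin_le_nhds).congr'
    (eventually_nhdsWithin_of_forall fun x hx => ?_)
  dsimp only
  rw [tauMK_of_eq_add hm, tauMK, crossFactor_inv_pow_lt _ hx ht0 hD, mul_inv_cancel_left₀ hx]

lemma tendsto_crossFactor_minus_of_gt (ht0 : t0 ≠ 0) {j k : Fin n} (hkj : j < k) :
    Tendsto (fun x : ℝ => crossFactor x⁻¹ (tauMK x t0 j) (tauMK x t0 k)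
        (q ^ (getp lam j + getp lam k)) (q ^ (getp lam j - getp lam k)))
      (𝓝[≠] 0) (𝓝 ((if (k : ℕ) = j + 1 then 1 - q ^ (getp lam j - getp lam (j + 1)) else 1) *
        (if (k : ℕ) = 2 * n - 3 - j then 1 - t0 ^ 2 * q ^ (getp lam (n - 2) + getp lam (n - 1))
          else 1))) := by
  obtain ⟨m, hm⟩ : ∃ m, (k : ℕ) = j + m + 1 := ⟨k - j - 1, by omega⟩
  have hlim := (tendsto_powRatio (2 * (n - 1 - k) + m) (f := 2 * (n - 1 - k) + m + 1)
    (Nat.succ_ne_zero _) (t0 ^ 2 * q ^ (getp lam j + getp lam k))).mul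
    (tendsto_powRatio m (Nat.succ_ne_zero m) (q ^ (getp lam j - getp lam k)))
  have hval : (1 - 0 ^ (2 * (n - 1 - k) + m) * (t0 ^ 2 * q ^ (getp lam j + getp lam k))) *
      (1 - 0 ^ m * q ^ (getp lam j - getp lam k))
      = (if (k : ℕ) = j + 1 then 1 - q ^ (getp lam j - getp lam (j + 1)) else 1) *
        (if (k : ℕ) = 2 * n - 3 - j then 1 - t0 ^ 2 * q ^ (getp lam (n - 2) + getp lam (n - 1))
          else 1) := by
    rw [mul_comm, zero_pow_eq, zero_pow_eq]
    congr 1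
    · by_cases h : (k : ℕ) = j + 1
      · rw [if_pos h, if_pos (by omega), one_mul, ← h]
      · rw [if_neg h, if_neg (by omega), zero_mul, sub_zero]
    · by_cases h : (k : ℕ) = 2 * n - 3 - j
      · rw [if_pos h, if_pos (by omega), one_mul, show (j : ℕ) = n - 2 by omega,
          show (k : ℕ) = n - 1 by omega]
      · rw [if_neg h, if_neg (by omega), zero_mul, sub_zero]
  rw [← hval]
  refine (hlim.mono_left nhdsWithin_le_nhds).congr'
    (eventually_nhdsWithin_of_forall fun x hx => ?_)
  dsimp only
  rw [tauMK_of_eq_add hm, tauMK, crossFactor_inv_pow_gt _ hx ht0]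

lemma tendsto_crossFactor_minus (hq : 0 < q) (ht0 : t0 ≠ 0) {j k : Fin n} (hkj : k ≠ j) :
    Tendsto (fun x : ℝ => (if k < j then x⁻¹ else 1)⁻¹ *
        crossFactor x⁻¹ (tauMK x t0 j) (tauMK x t0 k)
          (q ^ (getp lam j + getp lam k)) (q ^ (getp lam j - getp lam k)))
      (𝓝[≠] 0) (𝓝 ((if (k : ℕ) = j + 1 then 1 - q ^ (getp lam j - getp lam (j + 1)) else 1) *
        (if (k : ℕ) = 2 * n - 3 - j then 1 - t0 ^ 2 * q ^ (getp lam (n - 2) + getp lam (n - 1))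
          else 1))) := by
  rcases lt_or_gt_of_ne hkj with hlt | hgt
  · rw [if_neg (by omega), one_mul]
    simpa only [if_pos hlt, inv_inv] using tendsto_crossFactor_minus_of_lt lam hq ht0 hlt
  · simpa only [if_neg (not_lt.2 hgt.le), inv_one, one_mul] using
      tendsto_crossFactor_minus_of_gt lam ht0 hgt

end PieriFactors

def boundaryFactor (a : Fin 4 → ℝ) (Q Q₁ Q₂ τ : ℝ) : ℝ :=
  (∏ r, (1 - a r * τ * Q)) / ((1 - τ ^ 2 * Q₁) * (1 - τ ^ 2 * Q₂))

lemma tendsto_boundaryFactor_tauMK {n : ℕ} (a : Fin 4 → ℝ) (Q : ℝ) {Q₁ Q₂ t0 : ℝ} (j : Fin n)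
    (hden : (1 - t0 ^ 2 * Q₁) * (1 - t0 ^ 2 * Q₂) ≠ 0) :
    Tendsto (fun x => boundaryFactor a Q Q₁ Q₂ (tauMK x t0 j)) (𝓝 0)
      (𝓝 (if (j : ℕ) = n - 1 then boundaryFactor a Q Q₁ Q₂ t0 else 1)) := by
  have hτ0 : tauMK 0 t0 j = if (j : ℕ) = n - 1 then t0 else 0 := by
    have := j.isLt
    split_ifs with h
    · simp [tauMK, show n - 1 - (j : ℕ) = 0 by omega]
    · simp [tauMK, show n - 1 - (j : ℕ) ≠ 0 by omega]
  have hcont : ContinuousAt (boundaryFactor a Q Q₁ Q₂) (tauMK 0 t0 j) := by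
    refine ContinuousAt.div (by fun_prop) (by fun_prop) ?_
    rw [hτ0]
    split_ifs
    · exact hden
    · simp
  have hτ : Tendsto (fun x => tauMK x t0 j) (𝓝 0) (𝓝 (tauMK 0 t0 j)) :=
    (by fun_prop : Continuous fun x : ℝ => x ^ (n - 1 - (j : ℕ)) * t0).tendsto 0
  have hval : boundaryFactor a Q Q₁ Q₂ (tauMK 0 t0 j)
      = if (j : ℕ) = n - 1 then boundaryFactor a Q Q₁ Q₂ t0 else 1 := by
    rw [hτ0]
    split_ifs
    · rfl
    · simp [boundaryFactor]
  rw [← hval]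
  exact hcont.tendsto.comp hτ

lemma prod_erase_ite_lt {n : ℕ} {M : Type*} [CommMonoid M] (j : Fin n) (s : M) :
    ∏ k ∈ univ.erase j, (if k < j then s else 1) = s ^ (j : ℕ) := by
  have hfilter : (univ.erase j).filter (· < j) = Iio j := by
    ext k
    simpa using ne_of_lt
  rw [prod_ite, prod_const, prod_const_one, mul_one, hfilter, Fin.card_Iio]

lemma prod_erase_ite_val_eq {n : ℕ} {M : Type*} [CommMonoid M] (j : Fin n) (i : ℕ) (X : M) :
    ∏ k ∈ univ.erase j, (if (k : ℕ) = i then X else 1) = if i < n ∧ i ≠ j then X else 1 := by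
  split_ifs with h
  · rw [prod_eq_single_of_mem (⟨i, h.1⟩ : Fin n) (by simpa [Fin.ext_iff] using h.2)
      fun k _ hk => if_neg fun e => hk (Fin.ext e)]
    exact if_pos rfl
  · refine prod_eq_one fun k hk => if_neg fun e => h ?_
    subst e
    exact ⟨k.isLt, fun h' => ne_of_mem_erase hk (Fin.ext h')⟩

section PieriLimits

variable {n : ℕ} {q t0 th0 : ℝ} (t : Fin 4 → ℝ) (lam : Fin n → ℤ) (j : Fin n)

lemma VP_eq (x : ℝ) : VP q t0 th0 t x lam j = (x ^ (n - 1) * th0)⁻¹ *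
    boundaryFactor t (q ^ getp lam j) (q ^ (2 * getp lam j)) (q ^ (2 * getp lam j + 1))
      (tauMK x t0 j) *
    ∏ k ∈ univ.erase j, crossFactor x (tauMK x t0 j) (tauMK x t0 k)
      (q ^ (getp lam j + getp lam k)) (q ^ (getp lam j - getp lam k)) := rfl

lemma VM_eq (x : ℝ) : VM q t0 th0 t x lam j = (x ^ (n - 1) * th0) *
    boundaryFactor (fun r => (t r)⁻¹) (q ^ getp lam j) (q ^ (2 * getp lam j))
      (q ^ (2 * getp lam j - 1)) (tauMK x t0 j) *
    ∏ k ∈ univ.erase j, crossFactor x⁻¹ (tauMK x t0 j) (tauMK x t0 k)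
      (q ^ (getp lam j + getp lam k)) (q ^ (getp lam j - getp lam k)) := rfl

lemma pow_eq_pow_sub_mul_pow (x : ℝ) : x ^ (n - 1) = x ^ (n - 1 - j) * x ^ (j : ℕ) := by
  rw [← pow_add]
  congr 1
  omega

lemma scaled_VP_eq {x : ℝ} (hx : x ≠ 0) (hth0 : th0 ≠ 0) :
    x ^ (n - 1 - j) * th0 * VP q t0 th0 t x lam j
      = boundaryFactor t (q ^ getp lam j) (q ^ (2 * getp lam j)) (q ^ (2 * getp lam j + 1))
          (tauMK x t0 j) *
        ∏ k ∈ univ.erase j, ((if k < j then x else 1)⁻¹ *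
          crossFactor x (tauMK x t0 j) (tauMK x t0 k)
            (q ^ (getp lam j + getp lam k)) (q ^ (getp lam j - getp lam k))) := by
  rw [VP_eq, prod_mul_distrib, prod_inv_distrib, prod_erase_ite_lt, pow_eq_pow_sub_mul_pow j]
  field_simp

lemma scaled_VM_eq {x : ℝ} (hx : x ≠ 0) (hth0 : th0 ≠ 0) :
    (x ^ (n - 1 - j) * th0)⁻¹ * VM q t0 th0 t x lam j
      = boundaryFactor (fun r => (t r)⁻¹) (q ^ getp lam j) (q ^ (2 * getp lam j))
          (q ^ (2 * getp lam j - 1)) (tauMK x t0 j) *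
        ∏ k ∈ univ.erase j, ((if k < j then x⁻¹ else 1)⁻¹ *
          crossFactor x⁻¹ (tauMK x t0 j) (tauMK x t0 k)
            (q ^ (getp lam j + getp lam k)) (q ^ (getp lam j - getp lam k))) := by
  rw [VM_eq, prod_mul_distrib, prod_inv_distrib, prod_erase_ite_lt, inv_pow, inv_inv,
    pow_eq_pow_sub_mul_pow j]
  field_simp

theorem tendsto_scaled_VP (hn : 2 ≤ n) (hq : 0 < q) (ht0 : t0 ≠ 0) (hth0 : th0 ≠ 0)
    (hden : (1 - t0 ^ 2 * q ^ (2 * getp lam j)) * (1 - t0 ^ 2 * q ^ (2 * getp lam j + 1)) ≠ 0) :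
    Tendsto (fun x => x ^ (n - 1 - j) * th0 * VP q t0 th0 t x lam j) (𝓝[≠] 0)
      (𝓝 (vplus q t0 t lam j)) := by
  have hlim := ((tendsto_boundaryFactor_tauMK t (q ^ getp lam j) j hden).mono_left
    nhdsWithin_le_nhds).mul (tendsto_finsetProd (univ.erase j) fun k hk =>
      tendsto_crossFactor_plus lam hq ht0 (ne_of_mem_erase hk))
  have hval : (if (j : ℕ) = n - 1 then boundaryFactor t (q ^ getp lam j) (q ^ (2 * getp lam j))
        (q ^ (2 * getp lam j + 1)) t0 else 1) *
      ∏ k ∈ univ.erase j,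
        (if (k : ℕ) = j - 1 then 1 - q ^ (getp lam (j - 1) - getp lam j) else 1)
      = vplus q t0 t lam j := by
    have := j.isLt
    rw [prod_erase_ite_val_eq]
    unfold vplus boundaryFactor
    split_ifs <;> first | omega | ring
  rw [hval] at hlim
  exact hlim.congr'
    (eventually_nhdsWithin_of_forall fun x hx => (scaled_VP_eq t lam j hx hth0).symm)

theorem tendsto_scaled_VM (hn : 2 ≤ n) (hq : 0 < q) (ht0 : t0 ≠ 0) (hth0 : th0 ≠ 0)
    (hden : (1 - t0 ^ 2 * q ^ (2 * getp lam j)) * (1 - t0 ^ 2 * q ^ (2 * getp lam j - 1)) ≠ 0) :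
    Tendsto (fun x => (x ^ (n - 1 - j) * th0)⁻¹ * VM q t0 th0 t x lam j) (𝓝[≠] 0)
      (𝓝 (vminus q t0 t lam j)) := by
  have hlim := ((tendsto_boundaryFactor_tauMK (fun r => (t r)⁻¹) (q ^ getp lam j) j hden).mono_left
    nhdsWithin_le_nhds).mul (tendsto_finsetProd (univ.erase j) fun k hk =>
      tendsto_crossFactor_minus lam hq ht0 (ne_of_mem_erase hk))
  have hval : (if (j : ℕ) = n - 1 then boundaryFactor (fun r => (t r)⁻¹) (q ^ getp lam j)
        (q ^ (2 * getp lam j)) (q ^ (2 * getp lam j - 1)) t0 else 1) *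
      ∏ k ∈ univ.erase j,
        ((if (k : ℕ) = j + 1 then 1 - q ^ (getp lam j - getp lam (j + 1)) else 1) *
          (if (k : ℕ) = 2 * n - 3 - j then
            1 - t0 ^ 2 * q ^ (getp lam (n - 2) + getp lam (n - 1)) else 1))
      = vminus q t0 t lam j := by
    have := j.isLt
    rw [prod_mul_distrib, prod_erase_ite_val_eq, prod_erase_ite_val_eq]
    unfold vminus boundaryFactor
    split_ifs with h <;> first | omega | (try rw [h]); ring
  rw [hval] at hlim
  exact hlim.congr'
    (eventually_nhdsWithin_of_forall fun x hx => (scaled_VM_eq t lam j hx hth0).symm)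

end PieriLimits

lemma one_sub_mul_zpow_ne_zero {c q : ℝ} (hq0 : 0 < q) (hq1 : q < 1) (hc0 : 0 ≤ c) (hc1 : c ≠ 1)
    (hcq : c * q < 1) {e : ℤ} (he : 0 ≤ e) : 1 - c * q ^ e ≠ 0 := by
  rw [sub_ne_zero]
  rcases he.eq_or_lt with rfl | he
  · simpa using hc1.symm
  · have hqe : q ^ e ≤ q := by
      simpa using zpow_le_zpow_right_of_le_one₀ hq0 hq1.le (Int.add_one_le_of_lt he)
    nlinarith [mul_le_mul_of_nonneg_left hqe hc0]

theorem stmt4_general {n : ℕ} (hn : 2 ≤ n) (q : ℝ) (hq : q ∈ Set.Ioo (0 : ℝ) 1)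
    (th : Fin 4 → ℝ) (hth : ∀ r, th r ∈ Set.Ioo (-1 : ℝ) 1 ∧ th r ≠ 0)
    (hthprod : 0 < th 0 * th 1 * th 2 * th 3)
    (t0 : ℝ) (ht0 : t0 = Real.sqrt (q⁻¹ * (th 0 * th 1 * th 2 * th 3)))
    (t : Fin 4 → ℝ)
    (ht0ne : t0 ≠ 1)
    (lam : Fin n → ℤ) (hlam : IsPart lam) (j : Fin n) :
    (IsPart (lam + eVec j) →
      Filter.Tendsto (fun tt : ℝ => (tt ^ (n - 1 - (j : ℕ)) * th 0) * VP q t0 (th 0) t tt lam j)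
        (nhdsWithin 0 (Set.Ioi 0)) (nhds (vplus q t0 t lam j))) ∧
    (IsPart (lam - eVec j) →
      Filter.Tendsto (fun tt : ℝ => (tt ^ (n - 1 - (j : ℕ)) * th 0)⁻¹ * VM q t0 (th 0) t tt lam j)
        (nhdsWithin 0 (Set.Ioi 0)) (nhds (vminus q t0 t lam j))) := by
  obtain ⟨hq0, hq1⟩ := hq
  have habs (r : Fin 4) : |th r| < 1 := abs_lt.2 (hth r).1
  have hprod : th 0 * th 1 * th 2 * th 3 < 1 := by
    refine (le_abs_self _).trans_lt ?_
    simp only [abs_mul]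
    exact mul_lt_one_of_nonneg_of_lt_one_right (mul_le_one₀ (mul_le_one₀ (habs 0).le
      (abs_nonneg _) (habs 1).le) (abs_nonneg _) (habs 2).le) (abs_nonneg _) (habs 3)
  have ht0pos : 0 < t0 := ht0 ▸ Real.sqrt_pos.2 (by positivity)
  have ht0q : t0 ^ 2 * q = th 0 * th 1 * th 2 * th 3 := by
    rw [ht0, Real.sq_sqrt (by positivity)]
    field_simp
  have hden {e : ℤ} (he : 0 ≤ e) : 1 - t0 ^ 2 * q ^ e ≠ 0 :=
    one_sub_mul_zpow_ne_zero hq0 hq1 (sq_nonneg t0)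
      (by rwa [Ne, pow_eq_one_iff_of_nonneg ht0pos.le two_ne_zero]) (ht0q ▸ hprod) he
  have hlamj : 0 ≤ getp lam j := by simpa [getp] using hlam.2 j
  refine ⟨fun _ => ?_, fun hminus => ?_⟩
  · exact (tendsto_scaled_VP t lam j hn hq0 ht0pos.ne' (hth 0).2
      (mul_ne_zero (hden (by omega)) (hden (by omega)))).mono_left (nhdsGT_le_nhdsNE 0)
  · have hlamj' : 1 ≤ getp lam j := by simpa [getp, eVec] using hminus.2 j
    exact (tendsto_scaled_VM t lam j hn hq0 ht0pos.ne' (hth 0).2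
      (mul_ne_zero (hden (by omega)) (hden (by omega)))).mono_left (nhdsGT_le_nhdsNE 0)

/-- `t → 0` limits of the Macdonald-Koornwinder Pieri coefficients:
`τ̂_j V_j^+(λ;t) → v_j^+(λ)` and `τ̂_j⁻¹ V_j^-(λ;t) → v_j^-(λ)`. -/
theorem stmt4 {n : ℕ} (hn : 2 ≤ n) (q : ℝ) (hq : q ∈ Set.Ioo (0 : ℝ) 1)
    (th : Fin 4 → ℝ) (hth : ∀ r, th r ∈ Set.Ioo (-1 : ℝ) 1 ∧ th r ≠ 0)
    (hth0 : 0 < th 0) (hthprod : 0 < th 0 * th 1 * th 2 * th 3)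
    (t0 : ℝ) (ht0 : t0 = Real.sqrt (q⁻¹ * (th 0 * th 1 * th 2 * th 3)))
    (t : Fin 4 → ℝ) (ht : t 0 = t0 ∧ ∀ r : Fin 4, r ≠ 0 → t r = th 0 * th r / t0)
    (ht0ne : t0 ≠ 1)
    (lam : Fin n → ℤ) (hlam : IsPart lam) (j : Fin n) :
    (IsPart (lam + eVec j) →
      Filter.Tendsto (fun tt : ℝ => (tt ^ (n - 1 - (j : ℕ)) * th 0) * VP q t0 (th 0) t tt lam j)
        (nhdsWithin 0 (Set.Ioi 0)) (nhds (vplus q t0 t lam j))) ∧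
    (IsPart (lam - eVec j) →
      Filter.Tendsto (fun tt : ℝ => (tt ^ (n - 1 - (j : ℕ)) * th 0)⁻¹ * VM q t0 (th 0) t tt lam j)
        (nhdsWithin 0 (Set.Ioi 0)) (nhds (vminus q t0 t lam j))) :=
  stmt4_general hn q hq th hth hthprod t0 ht0 t ht0ne lam hlam j

end
end

section
/- For λ ∈ Λ and ξ ∈ ℝ^n define the anti-invariant Fourier kernel χ_ξ(λ) = (2π)^{−n/2} i^{−n²} Σ_{w∈W} sign(w) e^{i⟨w(ρ+λ),ξ⟩}, where ρ = (n, n−1, …, 1) and sign(w) = ε_1⋯ε_n · sign(σ) for w = (σ,ε) ∈ W = S_n ⋉ {1,−1}^n. Then for all λ, μ ∈ Λ: ∫_𝔸 χ_ξ(λ) conj(χ_ξ(μ)) dξ = 1 if λ = μ and = 0 if λ ≠ μ, where 𝔸 = {ξ ∈ ℝ^n : π > ξ_1 > ⋯ > ξ_n > 0} and dξ is Lebesgue measure. (Orthonormality of the free anti-invariant Fourier kernel on the hyperoctahedral Weyl alcove.) -/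
open scoped BigOperators
open MeasureTheory Filter

noncomputable section

attribute [local instance] Classical.propDecidable

/-- sign character of the hyperoctahedral group. -/
def signW {n : ℕ} (w : Equiv.Perm (Fin n) × (Fin n → Bool)) : ℤ :=
  (Equiv.Perm.sign w.1 : ℤ) * ∏ j, (if w.2 j then 1 else -1)

/-- the staircase vector `ρ = (n, n-1, …, 1)`. -/
def rhoV (n : ℕ) : Fin n → ℤ := fun j => (n : ℤ) - (j : ℕ)

/-- the anti-invariant Fourier kernel `χ_ξ(λ)`. -/
def chiKer {n : ℕ} (ξ : Fin n → ℝ) (lam : Fin n → ℤ) : ℂ :=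
  (((2 * Real.pi) ^ (-(n : ℝ) / 2) : ℝ) : ℂ) * Complex.I ^ (-(n ^ 2 : ℤ)) *
    ∑ w : Equiv.Perm (Fin n) × (Fin n → Bool),
      (signW w : ℂ) *
        Complex.exp (Complex.I *
          ∑ j, ((signAct w.1 w.2 (rhoV n + lam) j : ℂ) * (ξ j : ℂ)))

/-!
Summing out the signs of `W = S_n ⋉ {±1}ⁿ` factorises the kernel:
`χ_ξ(λ) = (2π)^{-n/2} i^{-n²} (2i)ⁿ det[sin((ρ + λ)_k ξ_j)]`. The product of two such sine determinants
is symmetric in the coordinates of `ξ`, and the cube `(0, π)ⁿ` is, up to the null set where two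
coordinates agree, the disjoint union of the `n!` coordinate permutations of the alcove. So the
alcove integral is `1/n!` of the cube integral, which Fubini and the orthogonality
`∫₀^π sin(kx) sin(lx) dx = (π/2) δ_{kl}` (`k, l > 0`) reduce to counting the pairs `σ, τ` with
`(ρ + λ) ∘ σ = (ρ + μ) ∘ τ`; since both vectors are strictly decreasing, these are the pairs
`σ = τ`, and they exist only when `λ = μ`.
-/

open Real Equiv

theorem integral_cos_int_mul (k : ℤ) :
    ∫ x in (0 : ℝ)..π, cos (k * x) = if k = 0 then π else 0 := by
  split_ifs with hk
  · simp [hk]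
  · have hk' : (k : ℝ) ≠ 0 := by exact_mod_cast hk
    rw [intervalIntegral.integral_comp_mul_left (fun x => cos x) hk', integral_cos,
      mul_zero, sin_zero, sin_int_mul_pi, sub_zero, smul_zero]

theorem integral_sin_int_mul_mul_sin {k l : ℤ} (hk : 0 < k) (hl : 0 < l) :
    ∫ x in (0 : ℝ)..π, sin (k * x) * sin (l * x) = if k = l then π / 2 else 0 := by
  have hprod : ∀ x : ℝ, sin (k * x) * sin (l * x)
      = (cos (((k - l : ℤ) : ℝ) * x) - cos (((k + l : ℤ) : ℝ) * x)) / 2 := fun x => by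
    push_cast; rw [sub_mul, add_mul, cos_sub, cos_add]; ring
  simp_rw [hprod]
  rw [intervalIntegral.integral_div, intervalIntegral.integral_sub
    ((by fun_prop : Continuous fun x : ℝ => cos (((k - l : ℤ) : ℝ) * x)).intervalIntegrable _ _)
    ((by fun_prop : Continuous fun x : ℝ => cos (((k + l : ℤ) : ℝ) * x)).intervalIntegrable _ _),
    integral_cos_int_mul, integral_cos_int_mul, if_neg (show k + l ≠ 0 by omega)]
  simp only [sub_eq_zero, sub_zero]
  split_ifs <;> simp

theorem setIntegral_univ_pi_prod {ι : Type*} [Fintype ι] {E : ι → Type*}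
    [∀ i, MeasureSpace (E i)] [∀ i, SigmaFinite (volume : Measure (E i))]
    (s : ∀ i, Set (E i)) (f : ∀ i, E i → ℝ) :
    ∫ x in Set.univ.pi s, ∏ i, f i (x i) = ∏ i, ∫ y in s i, f i y := by
  rw [volume_pi, Measure.restrict_pi_pi]
  exact integral_fintype_prod_eq_prod _

theorem Continuous.integrableOn_univ_pi_Ioo {ι E : Type*} [Fintype ι] [NormedAddCommGroup E]
    {f : (ι → ℝ) → E} (hf : Continuous f) (a b : ℝ) :
    IntegrableOn f (Set.univ.pi fun _ => Set.Ioo a b) :=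
  (hf.continuousOn.integrableOn_compact (isCompact_univ_pi fun _ => isCompact_Icc)).mono_set
    (Set.pi_mono fun _ _ => Set.Ioo_subset_Icc_self)

section Ordering

variable {n : ℕ} {α : Type*} [LinearOrder α]

theorem StrictAnti.comp_perm_eq_comp_perm_iff {a b : Fin n → α} (ha : StrictAnti a)
    (hb : StrictAnti b) {σ τ : Perm (Fin n)} : a ∘ σ = b ∘ τ ↔ a = b ∧ σ = τ := by
  refine ⟨fun h => ?_, fun ⟨hab, hστ⟩ => hab ▸ hστ ▸ rfl⟩
  have hab : a = b := (ha.range_inj hb).1 <| by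
    rw [← EquivLike.range_comp a σ, h, EquivLike.range_comp]
  subst hab
  exact ⟨rfl, Equiv.ext fun j => ha.injective (congrFun h j)⟩

theorem Function.Injective.exists_strictAnti_comp_perm {ξ : Fin n → α}
    (hξ : Function.Injective ξ) : ∃ σ : Perm (Fin n), StrictAnti (ξ ∘ σ) :=
  ⟨Tuple.sort (OrderDual.toDual ∘ ξ),
    ((Tuple.monotone_sort (OrderDual.toDual ∘ ξ)).strictMono_of_injective
      (hξ.comp (Tuple.sort _).injective)).dual_right⟩

end Ordering

section Symmetrization

theorem measurePreserving_comp_perm {ι : Type*} [Fintype ι] (σ : Perm ι) :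
    MeasurePreserving (fun ξ : ι → ℝ => ξ ∘ σ) :=
  volume_preserving_arrowCongr' σ.symm (MeasurableEquiv.refl ℝ) (MeasurePreserving.id _)

theorem measurableEmbedding_comp_perm {ι : Type*} (σ : Perm ι) :
    MeasurableEmbedding (fun ξ : ι → ℝ => ξ ∘ σ) :=
  (MeasurableEquiv.arrowCongr' σ.symm (MeasurableEquiv.refl ℝ)).measurableEmbedding

theorem volume_setOf_not_injective {ι : Type*} [Fintype ι] :
    volume {ξ : ι → ℝ | ¬ Function.Injective ξ} = 0 := by
  have hunion : {ξ : ι → ℝ | ¬ Function.Injective ξ}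
      = ⋃ p : ι × ι, ⋃ (_ : p.1 ≠ p.2),
          (LinearMap.ker ((LinearMap.proj p.1 : (ι → ℝ) →ₗ[ℝ] ℝ) - LinearMap.proj p.2) :
            Set (ι → ℝ)) := by
    ext ξ
    simp [Function.Injective, sub_eq_zero, and_comm]
  rw [hunion]
  refine measure_iUnion_null fun p => measure_iUnion_null fun hp =>
    Measure.addHaar_submodule _ _ fun htop => hp ?_
  classical
  have := LinearMap.ker_eq_top.1 htop
  by_contra hne
  simpa [Pi.single_apply, Ne.symm hne] using congr($this (Pi.single p.1 1))

variable {n : ℕ}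

theorem measurableSet_setOf_strictAnti_and_mem {s : Set ℝ} (hs : MeasurableSet s) :
    MeasurableSet {ξ : Fin n → ℝ | StrictAnti ξ ∧ ∀ j, ξ j ∈ s} := by
  simp only [StrictAnti, Set.ofPred_and, Set.ofPred_forall]
  exact (MeasurableSet.iInter fun a => .iInter fun b => .iInter fun _ =>
      measurableSet_lt (measurable_pi_apply b) (measurable_pi_apply a)).inter
    (.iInter fun j => measurable_pi_apply j hs)

theorem setIntegral_univ_pi_eq_factorial_smul {E : Type*} [NormedAddCommGroup E]
    [NormedSpace ℝ E] {s : Set ℝ} (hs : MeasurableSet s)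
    {f : (Fin n → ℝ) → E} (hf : ∀ (σ : Perm (Fin n)) ξ, f (ξ ∘ σ) = f ξ)
    (hfi : IntegrableOn f (Set.univ.pi fun _ => s)) :
    ∫ ξ in Set.univ.pi (fun _ => s), f ξ
      = n.factorial • ∫ ξ in {ξ | StrictAnti ξ ∧ ∀ j, ξ j ∈ s}, f ξ := by
  set T := {ξ : Fin n → ℝ | StrictAnti ξ ∧ ∀ j, ξ j ∈ s}
  have hsub : ∀ σ : Perm (Fin n), (· ∘ σ) ⁻¹' T ⊆ Set.univ.pi fun _ => s :=
    fun σ ξ hξ j _ => by simpa using hξ.2 (σ⁻¹ j)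
  have hcover : (Set.univ.pi fun _ => s) =ᵐ[volume] ⋃ σ : Perm (Fin n), (· ∘ σ) ⁻¹' T := by
    refine ae_eq_set.2 ⟨measure_mono_null ?_ volume_setOf_not_injective,
      by simp [Set.sdiff_eq_empty.2 (Set.iUnion_subset hsub)]⟩
    rintro ξ ⟨hξs, hξT⟩ hinj
    obtain ⟨σ, hσ⟩ := hinj.exists_strictAnti_comp_perm
    exact hξT (Set.mem_iUnion.2 ⟨σ, hσ, fun j => hξs (σ j) trivial⟩)
  have hdisj : Pairwise (Function.onFun Disjoint fun σ : Perm (Fin n) => (· ∘ σ) ⁻¹' T) := by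
    refine fun σ τ hστ => Set.disjoint_left.2 fun ξ hσ hτ => hστ ?_
    have h : (ξ ∘ σ) ∘ ⇑(σ⁻¹) = (ξ ∘ τ) ∘ ⇑(τ⁻¹) := by
      ext j; simp
    exact inv_injective ((hσ.1.comp_perm_eq_comp_perm_iff hτ.1).1 h).2
  have hpiece : ∀ σ : Perm (Fin n), ∫ ξ in (· ∘ σ) ⁻¹' T, f ξ = ∫ ξ in T, f ξ := fun σ => by
    simpa only [hf] using (measurePreserving_comp_perm σ).setIntegral_preimage_emb
      (measurableEmbedding_comp_perm σ) f T
  rw [setIntegral_congr_set hcover, integral_iUnion_fintype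
      (fun σ => (measurableEmbedding_comp_perm σ).measurable
        (measurableSet_setOf_strictAnti_and_mem hs)) hdisj
      (fun σ => hfi.mono_set (hsub σ)),
    Finset.sum_congr rfl fun σ _ => hpiece σ, Finset.sum_const, Finset.card_univ,
    Fintype.card_perm, Fintype.card_fin]

end Symmetrization

section SineDeterminant

variable {n : ℕ}

def sineDet (a : Fin n → ℤ) (ξ : Fin n → ℝ) : ℝ :=
  (Matrix.of fun k j => sin (a k * ξ j)).det

theorem continuous_sineDet (a : Fin n → ℤ) : Continuous (sineDet a) := by
  unfold sineDet; fun_prop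

theorem sineDet_comp_perm (a : Fin n → ℤ) (σ : Perm (Fin n)) (ξ : Fin n → ℝ) :
    sineDet a (ξ ∘ σ) = Perm.sign σ * sineDet a ξ :=
  Matrix.det_permute' σ (Matrix.of fun k j => sin (a k * ξ j))

theorem sineDet_mul_sineDet_comp_perm (a b : Fin n → ℤ) (σ : Perm (Fin n)) (ξ : Fin n → ℝ) :
    sineDet a (ξ ∘ σ) * sineDet b (ξ ∘ σ) = sineDet a ξ * sineDet b ξ := by
  rw [sineDet_comp_perm, sineDet_comp_perm, mul_mul_mul_comm, ← Int.cast_mul,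
    ← Units.val_mul, Int.units_mul_self, Units.val_one, Int.cast_one, one_mul]

theorem sineDet_mul_sineDet (a b : Fin n → ℤ) (ξ : Fin n → ℝ) :
    sineDet a ξ * sineDet b ξ = ∑ σ : Perm (Fin n), ∑ τ : Perm (Fin n),
      ((Perm.sign σ * Perm.sign τ : ℤ) : ℝ) *
        ∏ j, (sin (a (σ j) * ξ j) * sin (b (τ j) * ξ j)) := by
  simp only [sineDet, Matrix.det_apply', Matrix.of_apply, Finset.sum_mul_sum,
    Finset.prod_mul_distrib, Int.cast_mul]
  refine Finset.sum_congr rfl fun σ _ => Finset.sum_congr rfl fun τ _ => by ring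

theorem setIntegral_Ioo_prod_sin_mul_sin {a b : Fin n → ℤ} (ha : ∀ j, 0 < a j)
    (hb : ∀ j, 0 < b j) :
    ∫ ξ in Set.univ.pi (fun _ => Set.Ioo 0 π), ∏ j, (sin (a j * ξ j) * sin (b j * ξ j))
      = if a = b then (π / 2) ^ n else 0 := by
  rw [setIntegral_univ_pi_prod (fun _ => Set.Ioo 0 π)
    (fun j x => sin (a j * x) * sin (b j * x))]
  simp_rw [← integral_Ioc_eq_integral_Ioo, ← intervalIntegral.integral_of_le pi_pos.le,
    integral_sin_int_mul_mul_sin (ha _) (hb _), Fintype.prod_ite_zero, funext_iff,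
    Finset.prod_const, Finset.card_univ, Fintype.card_fin]

theorem setIntegral_Ioo_sineDet_mul_sineDet {a b : Fin n → ℤ} (ha : StrictAnti a)
    (hb : StrictAnti b) (ha0 : ∀ j, 0 < a j) (hb0 : ∀ j, 0 < b j) :
    ∫ ξ in Set.univ.pi (fun _ => Set.Ioo 0 π), sineDet a ξ * sineDet b ξ
      = if a = b then n.factorial * (π / 2) ^ n else 0 := by
  have hint : ∀ σ τ : Perm (Fin n), IntegrableOn
      (fun ξ : Fin n → ℝ => ∏ j, (sin (a (σ j) * ξ j) * sin (b (τ j) * ξ j)))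
      (Set.univ.pi fun _ => Set.Ioo 0 π) := fun σ τ =>
    Continuous.integrableOn_univ_pi_Ioo (by fun_prop) _ _
  have hterm : ∀ σ τ : Perm (Fin n),
      ∫ ξ in Set.univ.pi (fun _ => Set.Ioo 0 π), ∏ j, (sin (a (σ j) * ξ j) * sin (b (τ j) * ξ j))
        = if a ∘ σ = b ∘ τ then (π / 2) ^ n else 0 := fun σ τ =>
    setIntegral_Ioo_prod_sin_mul_sin (fun j => ha0 _) (fun j => hb0 _)
  simp_rw [sineDet_mul_sineDet]
  rw [integral_finsetSum _ fun σ _ => integrable_finsetSum _ fun τ _ => (hint σ τ).const_mul _]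
  simp_rw [integral_finsetSum _ fun τ _ => (hint _ τ).const_mul _, integral_const_mul, hterm,
    ha.comp_perm_eq_comp_perm_iff hb]
  split_ifs with hab
  · simp [hab, -Int.cast_mul, Int.units_coe_mul_self, Fintype.card_perm]
  · simp [hab]

theorem setIntegral_alcove_sineDet_mul_sineDet {a b : Fin n → ℤ} (ha : StrictAnti a)
    (hb : StrictAnti b) (ha0 : ∀ j, 0 < a j) (hb0 : ∀ j, 0 < b j) :
    ∫ ξ in alcove n, sineDet a ξ * sineDet b ξ = if a = b then (π / 2) ^ n else 0 := by
  have h := setIntegral_univ_pi_eq_factorial_smul measurableSet_Ioo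
    (f := fun ξ => sineDet a ξ * sineDet b ξ) (sineDet_mul_sineDet_comp_perm a b)
    (((continuous_sineDet a).mul (continuous_sineDet b)).integrableOn_univ_pi_Ioo 0 π)
  rw [setIntegral_Ioo_sineDet_mul_sineDet ha hb ha0 hb0, nsmul_eq_mul] at h
  have hfac : (n.factorial : ℝ) ≠ 0 := Nat.cast_ne_zero.2 n.factorial_ne_zero
  refine mul_left_cancel₀ hfac ?_
  rw [mul_ite, mul_zero]
  exact h.symm

end SineDeterminant

section Kernel

variable {n : ℕ}

theorem sum_bool_sign_mul_exp (x : ℝ) :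
    ∑ e : Bool, ((if e then 1 else -1 : ℤ) : ℂ) *
      Complex.exp (Complex.I * (((if e then 1 else -1 : ℤ) : ℂ) * x))
      = 2 * Complex.I * (sin x : ℂ) := by
  simp only [Fintype.sum_bool, if_true, Bool.false_eq_true, if_false, Complex.ofReal_sin,
    Complex.sin]
  push_cast
  ring_nf
  rw [Complex.I_sq]
  ring

theorem sum_signW_mul_exp (a : Fin n → ℤ) (ξ : Fin n → ℝ) :
    ∑ w : Perm (Fin n) × (Fin n → Bool), (signW w : ℂ) *
      Complex.exp (Complex.I * ∑ j, ((signAct w.1 w.2 a j : ℂ) * (ξ j : ℂ)))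
      = (2 * Complex.I) ^ n * sineDet a ξ := by
  have hσ : ∀ σ : Perm (Fin n), ∑ ε : Fin n → Bool, (signW (σ, ε) : ℂ) *
      Complex.exp (Complex.I * ∑ j, ((signAct σ ε a j : ℂ) * (ξ j : ℂ)))
      = Perm.sign σ * ∏ j, (2 * Complex.I * (sin (a (σ j) * ξ j) : ℂ)) := by
    intro σ
    simp_rw [← sum_bool_sign_mul_exp, Fintype.prod_sum, Finset.mul_sum]
    refine Finset.sum_congr rfl fun ε _ => ?_
    simp only [signW, signAct, Complex.exp_sum, Finset.prod_mul_distrib]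
    push_cast
    simp only [mul_assoc]
  rw [Fintype.sum_prod_type, Finset.sum_congr rfl fun σ _ => hσ σ, sineDet, Matrix.det_apply']
  simp only [Finset.prod_mul_distrib, Finset.prod_const, Finset.card_univ, Fintype.card_fin,
    Matrix.of_apply]
  push_cast
  rw [Finset.mul_sum]
  refine Finset.sum_congr rfl fun σ _ => by ring

theorem chiKer_eq (ξ : Fin n → ℝ) (lam : Fin n → ℤ) :
    chiKer ξ lam = (((2 * π) ^ (-(n : ℝ) / 2) : ℝ) : ℂ) *
      (Complex.I ^ (-(n ^ 2 : ℤ)) * (2 * Complex.I) ^ n) * sineDet (rhoV n + lam) ξ := by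
  rw [chiKer, sum_signW_mul_exp]
  ring

theorem chiKer_mul_conj_chiKer (ξ : Fin n → ℝ) (lam mu : Fin n → ℤ) :
    chiKer ξ lam * (starRingEnd ℂ) (chiKer ξ mu)
      = (((2 / π) ^ n * (sineDet (rhoV n + lam) ξ * sineDet (rhoV n + mu) ξ) : ℝ) : ℂ) := by
  set z := Complex.I ^ (-(n ^ 2 : ℤ)) * (2 * Complex.I) ^ n
  have hz : z * (starRingEnd ℂ) z = ((4 ^ n : ℝ) : ℂ) := by
    rw [Complex.mul_conj', norm_mul, norm_zpow, norm_pow, norm_mul, Complex.norm_I]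
    norm_num [sq, ← mul_pow]
  have hc : ((2 * π) ^ (-(n : ℝ) / 2)) ^ 2 * 4 ^ n = (2 / π) ^ n := by
    rw [← Real.rpow_natCast _ 2, ← Real.rpow_mul (by positivity),
      show -(n : ℝ) / 2 * (2 : ℕ) = -(n : ℕ) by push_cast; ring, Real.rpow_neg (by positivity),
      Real.rpow_natCast, ← inv_pow, ← mul_pow]
    congr 1
    field_simp
    norm_num
  rw [chiKer_eq, chiKer_eq, map_mul, map_mul, Complex.conj_ofReal, Complex.conj_ofReal, ← hc]
  calc _ = (((2 * π) ^ (-(n : ℝ) / 2) : ℝ) : ℂ) ^ 2 * (z * (starRingEnd ℂ) z) *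
      sineDet (rhoV n + lam) ξ * sineDet (rhoV n + mu) ξ := by ring
    _ = _ := by rw [hz]; push_cast; ring

theorem strictAnti_rhoV_add {lam : Fin n → ℤ} (h : IsPart lam) : StrictAnti (rhoV n + lam) :=
  fun j k hjk => by
    have : ((j : ℕ) : ℤ) < (k : ℕ) := by exact_mod_cast hjk
    simp only [Pi.add_apply, rhoV]
    linarith [h.1 j k hjk.le]

theorem rhoV_add_pos {lam : Fin n → ℤ} (h : IsPart lam) (j : Fin n) : 0 < (rhoV n + lam) j := by
  have : ((j : ℕ) : ℤ) < n := by exact_mod_cast j.2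
  simp only [Pi.add_apply, rhoV]
  linarith [h.2 j]

end Kernel

theorem stmt16_general {n : ℕ} (lam mu : Fin n → ℤ)
    (hlam : IsPart lam) (hmu : IsPart mu) :
    (∫ ξ in alcove n, chiKer ξ lam * (starRingEnd ℂ) (chiKer ξ mu)) =
      if lam = mu then 1 else 0 := by
  simp_rw [chiKer_mul_conj_chiKer, integral_complex_ofReal, integral_const_mul,
    setIntegral_alcove_sineDet_mul_sineDet (strictAnti_rhoV_add hlam) (strictAnti_rhoV_add hmu)
      (rhoV_add_pos hlam) (rhoV_add_pos hmu), add_right_inj]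
  split_ifs
  · rw [← mul_pow, div_mul_div_comm, mul_comm 2 π, div_self (by positivity), one_pow,
      Complex.ofReal_one]
  · simp

/-- Orthonormality of the free anti-invariant Fourier kernel on
the hyperoctahedral Weyl alcove. -/
theorem stmt16 {n : ℕ} (hn : 1 ≤ n) (lam mu : Fin n → ℤ)
    (hlam : IsPart lam) (hmu : IsPart mu) :
    (∫ ξ in alcove n, chiKer ξ lam * (starRingEnd ℂ) (chiKer ξ mu)) =
      if lam = mu then 1 else 0 :=
  stmt16_general lam mu hlam hmu
end
end
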